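/- arXiv:2011.04966 — 7 statements merged into one kernel-verified Lean document; each statement's English description precedes it below -/
import Mathlib

section
/- For any [n,k,d] linear code C over F_q with 1 ≤ k, the minimum distance equals n minus the maximum size of a coordinate set N ⊆ [n] whose corresponding columns of a generator matrix span a space of dimension less than k; that is, d = n - max{ |N| : N ⊆ [n], rank(N) < k }. -/
/-!
Codewords are the values `i ↦ x ⬝ᵥ g i` of linear functionals on the columns. If a nonzero
codeword vanishes on `N`, the columns indexed by `N` lie in the hyperplane `ker (x ⬝ᵥ ·)`, so
their rank is `< k`; conversely, columns of rank `< k` span a proper subspace, which lies in the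
kernel of some nonzero functional, and since the columns span `F^k` that functional gives a
nonzero codeword vanishing on `N`. So the largest rank-deficient `N` are the zero sets of the
minimum-weight codewords.
-/

open Module Submodule Matrix

section DotProductColumns

variable {K ι m : Type*} [Field K] [Fintype m] (g : ι → m → K)

theorem finrank_span_image_lt_of_dotProduct_eq_zero (x : m → K) {s : Set ι}
    (hs : ∀ i ∈ s, x ⬝ᵥ g i = 0) {i₀ : ι} (hi₀ : x ⬝ᵥ g i₀ ≠ 0) :
    finrank K (span K (g '' s)) < Fintype.card m := by
  let f : (m → K) →ₗ[K] K := dotProductBilin K K x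
  have hle : span K (g '' s) ≤ LinearMap.ker f := by
    rw [span_le]
    rintro _ ⟨i, hi, rfl⟩
    exact hs i hi
  have hne : span K (g '' s) ≠ ⊤ := fun htop ↦
    hi₀ (hle (htop ▸ mem_top : g i₀ ∈ span K (g '' s)))
  simpa using finrank_lt hne

theorem exists_dotProduct_eq_zero_of_finrank_span_lt [DecidableEq m]
    (hg : span K (Set.range g) = ⊤) {s : Set ι}
    (hs : finrank K (span K (g '' s)) < Fintype.card m) :
    ∃ x : m → K, (∀ i ∈ s, x ⬝ᵥ g i = 0) ∧ ∃ i, x ⬝ᵥ g i ≠ 0 := by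
  have hlt : span K (g '' s) < ⊤ := by
    refine lt_top_iff_ne_top.mpr fun htop ↦ ?_
    rw [htop, finrank_top, finrank_fintype_fun_eq_card] at hs
    exact hs.false
  obtain ⟨f, hf, hle⟩ := (span K (g '' s)).exists_le_ker_of_lt_top hlt
  have hx : ∀ v, (dotProductEquiv K m).symm f ⬝ᵥ v = f v := fun v ↦
    congr($((dotProductEquiv K m).apply_symm_apply f) v)
  refine ⟨(dotProductEquiv K m).symm f, fun i hi ↦ ?_, ?_⟩
  · rw [hx]
    exact hle (subset_span ⟨i, hi, rfl⟩)
  · by_contra! h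
    exact hf (LinearMap.ext_on_range hg fun i ↦ by rw [← hx, h, LinearMap.zero_apply])

end DotProductColumns

theorem stmt_1_general {F : Type*} [Field F] [DecidableEq F]
    (n k d : ℕ)
    (g : Fin n → (Fin k → F))
    (hfull : Module.finrank F (Submodule.span F (Set.range g)) = k)
    (hd : IsLeast {w : ℕ | ∃ x : Fin k → F,
      (fun i => ∑ j, x j * g i j) ≠ (0 : Fin n → F) ∧
      w = (Finset.univ.filter (fun i => (∑ j, x j * g i j) ≠ 0)).card} d) :
    d = n - sSup {m : ℕ | ∃ N : Finset (Fin n),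
      Module.finrank F (Submodule.span F (g '' ↑N)) < k ∧ N.card = m} := by
  have hspan : span F (Set.range g) = ⊤ :=
    eq_top_of_finrank_eq (by rw [hfull, finrank_fin_fun])
  change IsLeast {w | ∃ x : Fin k → F, (fun i ↦ x ⬝ᵥ g i) ≠ 0 ∧
    w = (Finset.univ.filter fun i ↦ x ⬝ᵥ g i ≠ 0).card} d at hd
  obtain ⟨x, hx, rfl⟩ := hd.1
  obtain ⟨i₀, hi₀⟩ := Function.ne_iff.mp hx
  have hweight : (Finset.univ.filter fun i ↦ x ⬝ᵥ g i = 0).card +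
      (Finset.univ.filter fun i ↦ x ⬝ᵥ g i ≠ 0).card = n := by
    simpa using Finset.card_filter_add_card_filter_not (s := Finset.univ) (fun i ↦ x ⬝ᵥ g i = 0)
  suffices IsGreatest _ (Finset.univ.filter (fun i ↦ x ⬝ᵥ g i = 0)).card by
    rw [this.csSup_eq]
    omega
  refine ⟨⟨_, ?_, rfl⟩, ?_⟩
  · simpa using finrank_span_image_lt_of_dotProduct_eq_zero g x (by simp) hi₀
  · rintro _ ⟨N, hN, rfl⟩
    obtain ⟨y, hyN, i₁, hi₁⟩ :=
      exists_dotProduct_eq_zero_of_finrank_span_lt g hspan (s := N) (by simpa using hN)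
    have hdy := hd.2 ⟨y, Function.ne_iff.mpr ⟨i₁, hi₁⟩, rfl⟩
    have hsupp : Finset.univ.filter (fun i ↦ y ⬝ᵥ g i ≠ 0) ⊆ Nᶜ := fun i hi ↦
      Finset.mem_compl.mpr fun hiN ↦ (Finset.mem_filter.mp hi).2 (hyN i hiN)
    have hcompl := Finset.card_le_card hsupp
    rw [Finset.card_compl, Fintype.card_fin] at hcompl
    have hNn := N.card_le_univ
    rw [Fintype.card_fin] at hNn
    omega

/-- The minimum distance of an [n,k,d] linear code with generator columns
    g_1, ..., g_n equals n - max{|N| : N ⊆ [n], rank(N) < k}. -/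
theorem stmt_1 {F : Type*} [Field F] [Fintype F] [DecidableEq F]
    (n k d : ℕ) (hk : 1 ≤ k)
    (g : Fin n → (Fin k → F))
    (hfull : Module.finrank F (Submodule.span F (Set.range g)) = k)
    (hd : IsLeast {w : ℕ | ∃ x : Fin k → F,
      (fun i => ∑ j, x j * g i j) ≠ (0 : Fin n → F) ∧
      w = (Finset.univ.filter (fun i => (∑ j, x j * g i j) ≠ 0)).card} d) :
    d = n - sSup {m : ℕ | ∃ N : Finset (Fin n),
      Module.finrank F (Submodule.span F (g '' ↑N)) < k ∧ N.card = m} :=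
  stmt_1_general n k d g hfull hd
end

section
/- Let S* be a finite family of subsets of a set X. For any integer t with 0 ≤ t ≤ |S*|, there exists a subfamily V ⊆ S* with |V| = t such that D(V) ≥ min(D(S*), ⌊t/2⌋), where D denotes the overlap function D(B) = Σ_{B∈B}|B| - |∪_{B∈B}B|. -/
/-- The overlap of a finite family of finite sets. -/
def overlap {α : Type*} [DecidableEq α] (B : Finset (Finset α)) : ℤ :=
  (∑ b ∈ B, (b.card : ℤ)) - ((B.sup id).card : ℤ)

namespace StmtSix

variable {α : Type*} [DecidableEq α]

/-- multiplicity of a point in the family -/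
def mult (S : Finset (Finset α)) (x : α) : ℕ := (S.filter (fun b => x ∈ b)).card

/-- natural-number version of the overlap -/
def Dnat (S : Finset (Finset α)) : ℕ := ∑ x ∈ S.sup id, (mult S x - 1)

lemma one_le_mult {S : Finset (Finset α)} {x : α} (hx : x ∈ S.sup id) : 1 ≤ mult S x := by
  rw [Finset.mem_sup] at hx
  obtain ⟨b, hb, hxb⟩ := hx
  exact Finset.card_pos.mpr ⟨b, Finset.mem_filter.mpr ⟨hb, hxb⟩⟩

lemma sum_card_eq (S : Finset (Finset α)) :
    ∑ b ∈ S, b.card = ∑ x ∈ S.sup id, mult S x := by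
  calc ∑ b ∈ S, b.card
      = ∑ b ∈ S, ∑ x ∈ S.sup id, (if x ∈ b then 1 else 0) := by
        refine Finset.sum_congr rfl fun b hb => ?_
        rw [← Finset.card_filter, Finset.filter_mem_eq_inter,
          Finset.inter_eq_right.mpr (show b ⊆ S.sup id from Finset.le_sup (f := id) hb)]
    _ = ∑ x ∈ S.sup id, ∑ b ∈ S, (if x ∈ b then 1 else 0) := Finset.sum_comm
    _ = _ := by
        refine Finset.sum_congr rfl fun x hx => ?_
        rw [← Finset.card_filter]; rfl

lemma overlap_eq (S : Finset (Finset α)) : overlap S = (Dnat S : ℤ) := by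
  unfold overlap Dnat
  have h1 : (∑ b ∈ S, (b.card : ℤ)) = ((∑ b ∈ S, b.card : ℕ) : ℤ) := by push_cast; rfl
  rw [h1, sum_card_eq]
  push_cast
  rw [Finset.sum_congr rfl (fun x hx => (Nat.cast_sub (one_le_mult hx) :
    ((mult S x - 1 : ℕ) : ℤ) = (mult S x : ℤ) - 1))]
  rw [Finset.sum_sub_distrib]
  simp

/-- decrease of the overlap when deleting one member -/
def dec (S : Finset (Finset α)) (b : Finset α) : ℕ := (b ∩ ((S.erase b).sup id)).card

lemma sup_eq_union {S : Finset (Finset α)} {b : Finset α} (hb : b ∈ S) :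
    S.sup id = b ∪ (S.erase b).sup id := by
  conv_lhs => rw [← Finset.insert_erase hb]
  rw [Finset.sup_insert, Finset.sup_eq_union]
  rfl

lemma overlap_erase {S : Finset (Finset α)} {b : Finset α} (hb : b ∈ S) :
    overlap (S.erase b) = overlap S - dec S b := by
  unfold overlap dec
  have hsum : ∑ c ∈ S, (c.card : ℤ) = (b.card : ℤ) + ∑ c ∈ S.erase b, (c.card : ℤ) :=
    (Finset.add_sum_erase _ _ hb).symm
  have hcard : ((b ∪ (S.erase b).sup id).card : ℤ) + ((b ∩ (S.erase b).sup id).card : ℤ)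
      = (b.card : ℤ) + (((S.erase b).sup id).card : ℤ) := by
    exact_mod_cast congrArg (Nat.cast : ℕ → ℤ) (Finset.card_union_add_card_inter b _)
  rw [sup_eq_union hb, hsum]
  push_cast at hcard ⊢
  linarith

lemma dec_le_filter {S : Finset (Finset α)} {b : Finset α} (hb : b ∈ S) :
    dec S b ≤ (b.filter (fun x => 2 ≤ mult S x)).card := by
  apply Finset.card_le_card
  intro x hx
  rw [Finset.mem_inter] at hx
  obtain ⟨hxb, hxU⟩ := hx
  rw [Finset.mem_sup] at hxU
  obtain ⟨c, hc, hxc⟩ := hxU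
  rw [Finset.mem_erase] at hc
  refine Finset.mem_filter.mpr ⟨hxb, ?_⟩
  exact Finset.one_lt_card.mpr ⟨b, Finset.mem_filter.mpr ⟨hb, hxb⟩,
    c, Finset.mem_filter.mpr ⟨hc.2, hxc⟩, fun h => hc.1 h.symm⟩

lemma sum_filter_eq (S : Finset (Finset α)) :
    ∑ b ∈ S, (b.filter (fun x => 2 ≤ mult S x)).card
      = ∑ x ∈ S.sup id, (if 2 ≤ mult S x then mult S x else 0) := by
  calc ∑ b ∈ S, (b.filter (fun x => 2 ≤ mult S x)).card
      = ∑ b ∈ S, ∑ x ∈ S.sup id, (if x ∈ b ∧ 2 ≤ mult S x then 1 else 0) := by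
        refine Finset.sum_congr rfl fun b hb => ?_
        rw [← Finset.card_filter]
        congr 1
        ext x
        simp only [Finset.mem_filter]
        constructor
        · rintro ⟨hxb, h2⟩
          exact ⟨(Finset.le_sup (f := id) hb : b ⊆ S.sup id) hxb, hxb, h2⟩
        · rintro ⟨_, hxb, h2⟩; exact ⟨hxb, h2⟩
    _ = ∑ x ∈ S.sup id, ∑ b ∈ S, (if x ∈ b ∧ 2 ≤ mult S x then 1 else 0) := Finset.sum_comm
    _ = _ := by
        refine Finset.sum_congr rfl fun x hx => ?_
        by_cases h2 : 2 ≤ mult S x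
        · simp only [h2, and_true, if_true]
          rw [← Finset.card_filter]; rfl
        · simp [h2]

lemma sum_dec_le (S : Finset (Finset α)) :
    ∑ b ∈ S, dec S b ≤ 2 * Dnat S := by
  calc ∑ b ∈ S, dec S b
      ≤ ∑ b ∈ S, (b.filter (fun x => 2 ≤ mult S x)).card :=
        Finset.sum_le_sum fun b hb => dec_le_filter hb
    _ = ∑ x ∈ S.sup id, (if 2 ≤ mult S x then mult S x else 0) := sum_filter_eq S
    _ ≤ ∑ x ∈ S.sup id, 2 * (mult S x - 1) := by
        refine Finset.sum_le_sum fun x hx => ?_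
        by_cases h2 : 2 ≤ mult S x
        · simp only [h2, if_true]; omega
        · simp [h2]
    _ = 2 * Dnat S := by rw [Dnat, Finset.mul_sum]

lemma arith {s D d : ℕ} (h2 : 2 ≤ s) (hsD : s ≤ 2 * D) (hd : s * d ≤ 2 * D) :
    (s - 1) / 2 + d ≤ D := by
  obtain ⟨q, hq⟩ : ∃ q, (s - 1) / 2 = q := ⟨_, rfl⟩
  rw [hq]
  have hs : s = 2 * q + 1 ∧ 1 ≤ q ∨ s = 2 * q + 2 := by omega
  rcases hs with ⟨h, hq1⟩ | h
  · subst h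
    by_contra hc
    push_neg at hc
    nlinarith [hc, hsD, hd]
  · subst h
    by_contra hc
    push_neg at hc
    nlinarith [hc, hsD, hd]

/-- key step: one member can be deleted losing not too much overlap -/
lemma step (S : Finset (Finset α)) (hS : S.Nonempty) :
    ∃ b ∈ S, min (overlap S) (((S.card - 1) / 2 : ℕ) : ℤ) ≤ overlap (S.erase b) := by
  obtain ⟨b, hb, hmin⟩ := Finset.exists_min_image S (dec S) hS
  refine ⟨b, hb, ?_⟩
  rcases Nat.eq_zero_or_pos (dec S b) with h0 | h1
  · rw [overlap_erase hb, h0]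
    simp
  · -- every member has positive decrease
    have hall : ∀ c ∈ S, 1 ≤ dec S c := fun c hc => le_trans h1 (hmin c hc)
    have hsD : S.card ≤ 2 * Dnat S := by
      calc S.card = ∑ _c ∈ S, 1 := by simp
        _ ≤ ∑ c ∈ S, dec S c := Finset.sum_le_sum hall
        _ ≤ 2 * Dnat S := sum_dec_le S
    have hd : S.card * dec S b ≤ 2 * Dnat S := by
      calc S.card * dec S b = S.card • dec S b := by simp
        _ ≤ ∑ c ∈ S, dec S c := Finset.card_nsmul_le_sum S _ _ hmin
        _ ≤ 2 * Dnat S := sum_dec_le S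
    have h2 : 2 ≤ S.card := by
      -- dec S b ≥ 1 means S.erase b is nonempty
      obtain ⟨x, hx⟩ := Finset.card_pos.mp h1
      rw [Finset.mem_inter, Finset.mem_sup] at hx
      obtain ⟨-, c, hc, -⟩ := hx
      have : 1 ≤ (S.erase b).card := Finset.card_pos.mpr ⟨c, hc⟩
      have := Finset.card_erase_of_mem hb
      omega
    have key := arith h2 hsD hd
    rw [overlap_erase hb, overlap_eq]
    refine le_trans (min_le_right _ _) ?_
    have : (((S.card - 1) / 2 : ℕ) : ℤ) + (dec S b : ℤ) ≤ (Dnat S : ℤ) := by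
      exact_mod_cast key
    linarith

end StmtSix

open StmtSix in
/-- For any 0 ≤ t ≤ |S*| there is a t-subfamily V ⊆ S* with
    D(V) ≥ min(D(S*), ⌊t/2⌋). -/
theorem stmt_6 {α : Type*} [DecidableEq α] (S : Finset (Finset α)) (t : ℕ)
    (ht : t ≤ S.card) :
    ∃ V ⊆ S, V.card = t ∧ min (overlap S) ((t / 2 : ℕ) : ℤ) ≤ overlap V := by
  obtain ⟨k, hk⟩ : ∃ k, S.card = t + k := ⟨S.card - t, by omega⟩
  clear ht
  induction k generalizing S with
  | zero => exact ⟨S, subset_rfl, by omega, min_le_left _ _⟩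
  | succ k ih =>
    have hS : S.Nonempty := Finset.card_pos.mp (by omega)
    obtain ⟨b, hb, hmin⟩ := step S hS
    have hcard : (S.erase b).card = t + k := by
      rw [Finset.card_erase_of_mem hb]; omega
    obtain ⟨V, hVsub, hVcard, hV⟩ := ih (S.erase b) hcard
    refine ⟨V, hVsub.trans (Finset.erase_subset _ _), hVcard, ?_⟩
    have h1 : ((t / 2 : ℕ) : ℤ) ≤ (((S.card - 1) / 2 : ℕ) : ℤ) := by
      exact_mod_cast Nat.div_le_div_right (by omega)
    calc min (overlap S) ((t / 2 : ℕ) : ℤ)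
        ≤ min (min (overlap S) (((S.card - 1) / 2 : ℕ) : ℤ)) ((t / 2 : ℕ) : ℤ) :=
          le_min (le_min (min_le_left _ _) (le_trans (min_le_right _ _) h1))
            (min_le_right _ _)
      _ ≤ min (overlap (S.erase b)) ((t / 2 : ℕ) : ℤ) := min_le_min hmin le_rfl
      _ ≤ overlap V := hV
end

section
/- Averaging over sub-families: let A_1,...,A_{w+1} be finite sets and let Θ be the collection of all t-subfamilies of {A_1,...,A_{w+1}} for some 2 ≤ t ≤ w+1. Then Σ_{V' ∈ Θ} D(V') ≥ C(w-1, t-2) · D({A_1,...,A_{w+1}}), where D is the overlap function and C(·,·) is the binomial coefficient. Consequently there exists a t-subfamily V with D(V) ≥ ⌈ C(w-1,t-2)/C(w+1,t) · D({A_1,...,A_{w+1}}) ⌉. -/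
open Finset

/-- Binomial arithmetic key inequality. -/
lemma arith_key (m s : ℕ) : ∀ d, 1 ≤ d → d ≤ m + 2 →
    Nat.choose (m+2) (s+2) + Nat.choose m s * (d - 1) ≤
      d * Nat.choose (m+1) (s+1) + Nat.choose (m+2-d) (s+2) := by
  intro d
  induction d with
  | zero => omega
  | succ d ih =>
    intro _ hd2
    rcases Nat.eq_or_lt_of_le (Nat.one_le_iff_ne_zero.mpr (by omega) : 1 ≤ d + 1) with h1 | h1
    · have hd0 : d = 0 := by omega
      subst hd0
      have h : Nat.choose (m+2) (s+2) = Nat.choose (m+1) (s+1) + Nat.choose (m+1) (s+2) :=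
        Nat.choose_succ_succ (m+1) (s+1)
      have h2 : m + 2 - 1 = m + 1 := by omega
      rw [h2]
      omega
    · have hd1 : 1 ≤ d := by omega
      have ihd := ih hd1 (by omega)
      have hpas : Nat.choose (m+2-d) (s+2) =
          Nat.choose (m+1-d) (s+1) + Nat.choose (m+1-d) (s+2) := by
        have h : m + 2 - d = (m + 1 - d) + 1 := by omega
        rw [h, Nat.choose_succ_succ]
      have hmono : Nat.choose (m+1-d) (s+1) ≤ Nat.choose m (s+1) :=
        Nat.choose_le_choose _ (by omega)
      have hpas2 : Nat.choose (m+1) (s+1) = Nat.choose m s + Nat.choose m (s+1) :=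
        Nat.choose_succ_succ m s
      have h3 : m + 2 - (d+1) = m + 1 - d := by omega
      rw [h3]
      calc Nat.choose (m+2) (s+2) + Nat.choose m s * (d + 1 - 1)
          = (Nat.choose (m+2) (s+2) + Nat.choose m s * (d - 1)) + Nat.choose m s := by
            have : d + 1 - 1 = (d - 1) + 1 := by omega
            rw [this]; ring
        _ ≤ d * Nat.choose (m+1) (s+1) + Nat.choose (m+2-d) (s+2) + Nat.choose m s := by omega
        _ = d * Nat.choose (m+1) (s+1) + (Nat.choose (m+1-d) (s+1) + Nat.choose m s)
              + Nat.choose (m+1-d) (s+2) := by rw [hpas]; ring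
        _ ≤ d * Nat.choose (m+1) (s+1) + Nat.choose (m+1) (s+1) + Nat.choose (m+1-d) (s+2) := by
            omega
        _ = (d+1) * Nat.choose (m+1) (s+1) + Nat.choose (m+1-d) (s+2) := by ring

/-- Number of (k+1)-subsets of s containing a fixed element a ∈ s. -/
lemma count_subsets_containing {α : Type*} [DecidableEq α] {s : Finset α} {a : α}
    (ha : a ∈ s) (k : ℕ) :
    ((s.powersetCard (k+1)).filter (fun V => a ∈ V)).card = Nat.choose (s.card - 1) k := by
  rw [← card_erase_of_mem ha, ← card_powersetCard]
  apply card_bij (fun V _ => V.erase a)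
  · intro V hV
    simp only [mem_filter, mem_powersetCard] at hV
    rw [mem_powersetCard]
    exact ⟨erase_subset_erase _ hV.1.1, by rw [card_erase_of_mem hV.2, hV.1.2]; omega⟩
  · intro V hV W hW h
    simp only [mem_filter] at hV hW
    rw [← insert_erase hV.2, ← insert_erase hW.2, h]
  · intro W hW
    rw [mem_powersetCard] at hW
    have haW : a ∉ W := fun h => (notMem_erase a s) (hW.1 h)
    refine ⟨insert a W, ?_, by rw [erase_insert haW]⟩
    simp only [mem_filter, mem_powersetCard]
    refine ⟨⟨?_, ?_⟩, mem_insert_self a W⟩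
    · exact insert_subset ha (hW.1.trans (erase_subset a s))
    · rw [card_insert_of_notMem haW, hW.2]

/-- Averaging over t-subfamilies of a family of w+1 distinct finite sets. -/
theorem stmt_9 {α : Type*} [DecidableEq α] (w t : ℕ) (ht2 : 2 ≤ t)
    (htw : t ≤ w + 1)
    (A : Fin (w + 1) → Finset α) (hinj : Function.Injective A) :
    ((Nat.choose (w - 1) (t - 2) : ℤ) * overlap (Finset.univ.image A) ≤
      ∑ V ∈ (Finset.univ.image A).powerset.filter (fun V => V.card = t),
        overlap V) ∧
    ∃ V ∈ (Finset.univ.image A).powerset.filter (fun V => V.card = t),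
      ⌈((Nat.choose (w - 1) (t - 2) : ℚ) / (Nat.choose (w + 1) t : ℚ)) *
        (overlap (Finset.univ.image A) : ℚ)⌉ ≤ overlap V := by
  obtain ⟨s, rfl⟩ : ∃ s, t = s + 2 := ⟨t - 2, by omega⟩
  obtain ⟨m, rfl⟩ : ∃ m, w = m + 1 := ⟨w - 1, by omega⟩
  simp only [Nat.add_sub_cancel]
  set F : Finset (Finset α) := Finset.univ.image A with hFdef
  have hF : F.card = m + 2 := by
    rw [card_image_of_injective _ hinj, card_univ, Fintype.card_fin]
  set U : Finset α := F.sup id with hUdef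
  have hfilter : F.powerset.filter (fun V => V.card = s + 2) = F.powersetCard (s+2) :=
    powersetCard_eq_filter.symm
  rw [hfilter]
  set Θ : Finset (Finset (Finset α)) := F.powersetCard (s+2) with hΘdef
  -- overlap decomposition
  have hdecomp : ∀ B : Finset (Finset α), B ⊆ F →
      overlap B = ∑ x ∈ U, (((B.filter (fun b => x ∈ b)).card : ℤ)
        - (if x ∈ B.sup id then 1 else 0)) := by
    intro B hB
    have hsupB : B.sup id ⊆ U := Finset.sup_mono hB
    have h1 : ∑ b ∈ B, (b.card : ℤ) = ∑ x ∈ U, ((B.filter (fun b => x ∈ b)).card : ℤ) := by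
      have key : ∀ b ∈ B, (b.card : ℤ) = ∑ x ∈ U, (if x ∈ b then 1 else 0) := by
        intro b hb
        have hbU : U.filter (fun x => x ∈ b) = b := by
          rw [Finset.filter_mem_eq_inter, Finset.inter_eq_right]
          exact (Finset.le_sup (f := id) hb).trans hsupB
        rw [Finset.sum_boole, hbU]
      rw [Finset.sum_congr rfl key, Finset.sum_comm]
      refine Finset.sum_congr rfl fun x _ => ?_
      rw [Finset.sum_boole]
    have h2 : ((B.sup id).card : ℤ) = ∑ x ∈ U, (if x ∈ B.sup id then 1 else 0) := by
      have : U.filter (fun x => x ∈ B.sup id) = B.sup id := by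
        rw [Finset.filter_mem_eq_inter, Finset.inter_eq_right]
        exact hsupB
      rw [Finset.sum_boole, this]
    show (∑ b ∈ B, (b.card : ℤ)) - ((B.sup id).card : ℤ) = _
    rw [Finset.sum_sub_distrib, h1, h2]
  -- degree function
  set d : α → ℕ := fun x => (F.filter (fun b => x ∈ b)).card with hddef
  have hd1 : ∀ x ∈ U, 1 ≤ d x := by
    intro x hx
    rw [hUdef, Finset.mem_sup] at hx
    obtain ⟨b, hb, hxb⟩ := hx
    exact Finset.card_pos.mpr ⟨b, Finset.mem_filter.mpr ⟨hb, hxb⟩⟩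
  have hdle : ∀ x, d x ≤ m + 2 := fun x => hF ▸ Finset.card_filter_le _ _
  -- overlap F
  have hovF : overlap F = ∑ x ∈ U, ((d x : ℤ) - 1) := by
    rw [hdecomp F le_rfl]
    exact Finset.sum_congr rfl fun x hx => by rw [if_pos hx]
  -- sum over Θ of degrees at x
  have hS1 : ∀ x, ∑ V ∈ Θ, ((V.filter (fun b => x ∈ b)).card : ℤ)
      = (d x : ℤ) * (Nat.choose (m+1) (s+1) : ℤ) := by
    intro x
    have step1 : ∀ V ∈ Θ, ((V.filter (fun b => x ∈ b)).card : ℤ)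
        = ∑ b ∈ F, (if b ∈ V ∧ x ∈ b then 1 else 0) := by
      intro V hV
      rw [Finset.mem_powersetCard] at hV
      have : F.filter (fun b => b ∈ V ∧ x ∈ b) = V.filter (fun b => x ∈ b) := by
        ext b
        simp only [Finset.mem_filter]
        constructor
        · rintro ⟨_, hbV, hxb⟩; exact ⟨hbV, hxb⟩
        · rintro ⟨hbV, hxb⟩; exact ⟨hV.1 hbV, hbV, hxb⟩
      rw [Finset.sum_boole, this]
    rw [Finset.sum_congr rfl step1, Finset.sum_comm]
    have step2 : ∀ b ∈ F, ∑ V ∈ Θ, (if b ∈ V ∧ x ∈ b then (1:ℤ) else 0)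
        = if x ∈ b then (Nat.choose (m+1) (s+1) : ℤ) else 0 := by
      intro b hb
      by_cases hxb : x ∈ b
      · simp only [hxb, and_true, if_true]
        rw [Finset.sum_boole]
        have hc := count_subsets_containing (s := F) (a := b) hb (s+1)
        rw [hF] at hc
        norm_num at hc
        rw [hΘdef]
        exact_mod_cast hc
      · simp [hxb]
    rw [Finset.sum_congr rfl step2, Finset.sum_ite, Finset.sum_const, Finset.sum_const_zero,
      add_zero, nsmul_eq_mul]
  -- sum over Θ of union-membership indicators
  have hS2 : ∀ x, ∑ V ∈ Θ, (if x ∈ V.sup id then (1:ℤ) else 0)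
      = (Nat.choose (m+2) (s+2) : ℤ) - (Nat.choose (m+2 - d x) (s+2) : ℤ) := by
    intro x
    rw [Finset.sum_boole]
    have hcompl : Θ.filter (fun V => ¬ x ∈ V.sup id)
        = (F.filter (fun b => x ∉ b)).powersetCard (s+2) := by
      ext V
      rw [Finset.mem_filter, Finset.mem_powersetCard, Finset.mem_powersetCard]
      constructor
      · rintro ⟨⟨hVF, hVc⟩, hnx⟩
        exact ⟨fun b hb => Finset.mem_filter.mpr
          ⟨hVF hb, fun hxb => hnx (Finset.mem_sup.mpr ⟨b, hb, hxb⟩)⟩, hVc⟩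
      · rintro ⟨hVsub, hVc⟩
        refine ⟨⟨fun b hb => (Finset.mem_filter.mp (hVsub hb)).1, hVc⟩, fun hx => ?_⟩
        obtain ⟨b, hb, hxb⟩ := Finset.mem_sup.mp hx
        exact (Finset.mem_filter.mp (hVsub hb)).2 hxb
    have hcardcompl : (Θ.filter (fun V => ¬ x ∈ V.sup id)).card
        = Nat.choose (m+2 - d x) (s+2) := by
      rw [hcompl, card_powersetCard]
      congr 1
      have hsum := Finset.card_filter_add_card_filter_not
        (s := F) (p := fun b => x ∈ b)
      rw [hF] at hsum
      have hdx : d x = (F.filter (fun b => x ∈ b)).card := rfl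
      omega
    have hsplit := Finset.card_filter_add_card_filter_not
      (s := Θ) (p := fun V => x ∈ V.sup id)
    have hΘcard : Θ.card = Nat.choose (m+2) (s+2) := by
      rw [hΘdef, card_powersetCard, hF]
    rw [hΘcard] at hsplit
    rw [hcardcompl] at hsplit
    have : (Θ.filter (fun V => x ∈ V.sup id)).card
        = Nat.choose (m+2) (s+2) - Nat.choose (m+2 - d x) (s+2) := by omega
    rw [this]
    have hle : Nat.choose (m+2 - d x) (s+2) ≤ Nat.choose (m+2) (s+2) := by omega
    push_cast [Nat.cast_sub hle]
    ring
  -- per element inequality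
  have hper : ∀ x ∈ U, (Nat.choose m s : ℤ) * ((d x : ℤ) - 1)
      ≤ (d x : ℤ) * (Nat.choose (m+1) (s+1) : ℤ)
        - ((Nat.choose (m+2) (s+2) : ℤ) - (Nat.choose (m+2 - d x) (s+2) : ℤ)) := by
    intro x hx
    have h1 := hd1 x hx
    have h2 := hdle x
    have key := arith_key m s (d x) h1 h2
    have := (Nat.cast_le (α := ℤ)).mpr key
    push_cast [Nat.cast_sub h1] at this
    linarith
  -- part 1
  have hmain : (Nat.choose m s : ℤ) * overlap F ≤ ∑ V ∈ Θ, overlap V := by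
    have hrw : ∑ V ∈ Θ, overlap V = ∑ x ∈ U, (∑ V ∈ Θ, (((V.filter (fun b => x ∈ b)).card : ℤ)
        - (if x ∈ V.sup id then 1 else 0))) := by
      rw [← Finset.sum_comm]
      exact Finset.sum_congr rfl fun V hV =>
        hdecomp V (Finset.mem_powersetCard.mp hV).1
    rw [hrw, hovF, Finset.mul_sum]
    refine Finset.sum_le_sum fun x hx => ?_
    rw [Finset.sum_sub_distrib, hS1 x, hS2 x]
    exact hper x hx
  refine ⟨hmain, ?_⟩
  -- part 2
  have hΘne : Θ.Nonempty := by
    obtain ⟨V, hVF, hVc⟩ := Finset.exists_subset_card_eq (s := F) (n := s+2) (by omega)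
    exact ⟨V, Finset.mem_powersetCard.mpr ⟨hVF, hVc⟩⟩
  obtain ⟨V, hV, hVmax⟩ := Finset.exists_max_image Θ overlap hΘne
  refine ⟨V, hV, ?_⟩
  have hΘcard : Θ.card = Nat.choose (m+2) (s+2) := by
    rw [hΘdef, card_powersetCard, hF]
  have hsum_le : ∑ W ∈ Θ, overlap W ≤ (Nat.choose (m+2) (s+2) : ℤ) * overlap V := by
    calc ∑ W ∈ Θ, overlap W ≤ ∑ _W ∈ Θ, overlap V := Finset.sum_le_sum fun W hW => hVmax W hW
      _ = (Θ.card : ℤ) * overlap V := by rw [Finset.sum_const, nsmul_eq_mul]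
      _ = _ := by rw [hΘcard]
  have hkey : (Nat.choose m s : ℤ) * overlap F ≤ (Nat.choose (m+2) (s+2) : ℤ) * overlap V :=
    hmain.trans hsum_le
  rw [Int.ceil_le]
  have hpos : (0:ℚ) < (Nat.choose (m+2) (s+2) : ℚ) := by
    exact_mod_cast Nat.choose_pos (by omega : s + 2 ≤ m + 2)
  rw [div_mul_eq_mul_div, div_le_iff₀ hpos]
  have hq : (((Nat.choose m s : ℤ) * overlap F : ℤ) : ℚ)
      ≤ (((Nat.choose (m+2) (s+2) : ℤ) * overlap V : ℤ) : ℚ) := by exact_mod_cast hkey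
  push_cast at hq ⊢
  linarith
end

section
/- Let C be an [n,k] linear code with generator columns g_1,...,g_n and let V = {S_1,...,S_t} be a family of (r,δ)-repair sets satisfying Condition C1: for each i, |S_i ∩ (∪_{j≠i} S_j)| < |S_i| - δ + 1. Then rank(∪_{i=1}^t S_i) ≤ |∪_{i=1}^t S_i| - t(δ-1). -/
/-!
Condition C1 leaves every repair set `S i` at least `δ - 1` private coordinates, i.e. ones lying
in no other `S j`. Removing `δ - 1` of them from `S i` does not change its span, by the repair
property. Removing such a set `T i` from every `S i` at once therefore keeps the span of the whole
union, so its rank is at most `|⋃ S i| - ∑ |T i| = |⋃ S i| - t (δ - 1)`.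
-/

/-- The dimension of the span of the generator-matrix columns indexed by N. -/
noncomputable def colRank (F : Type*) [Field F] {n k : ℕ} (g : Fin n → (Fin k → F))
    (N : Finset (Fin n)) : ℕ :=
  Module.finrank F (Submodule.span F (g '' ↑N))

open Finset Submodule

section SpanImage

variable {K V α : Type*} [DivisionRing K] [AddCommGroup V] [Module K V] (g : α → V)

theorem finrank_span_image_le_card (s : Finset α) :
    Module.finrank K (span K (g '' ↑s)) ≤ #s := by
  classical
  rw [← coe_image]
  exact (finrank_span_finset_le_card _).trans card_image_le

theorem span_image_eq_of_finrank_eq {s t : Finset α} (hst : s ⊆ t)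
    (h : Module.finrank K (span K (g '' ↑s)) = Module.finrank K (span K (g '' ↑t))) :
    span K (g '' ↑s) = span K (g '' ↑t) :=
  have := FiniteDimensional.span_of_finite K (t.finite_toSet.image g)
  eq_of_le_of_finrank_eq (span_mono (Set.image_mono (coe_subset.2 hst))) h

end SpanImage

section PrivateParts

variable {ι α : Type*} [Fintype ι] [DecidableEq α]

theorem exists_subsets_card_eq_disjoint_others [DecidableEq ι] (S : ι → Finset α) {m : ℕ}
    (h : ∀ i, m ≤ #(S i \ (univ.erase i).sup S)) :
    ∃ T : ι → Finset α, (∀ i, T i ⊆ S i) ∧ (∀ i, #(T i) = m) ∧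
      ∀ i j, i ≠ j → Disjoint (T i) (S j) := by
  choose T hT hTcard using fun i => exists_subset_card_eq (h i)
  refine ⟨T, fun i => (hT i).trans sdiff_subset, hTcard, fun i j hij => ?_⟩
  refine disjoint_of_subset_left (hT i) (disjoint_of_subset_right ?_ sdiff_disjoint)
  exact le_sup (mem_erase.2 ⟨hij.symm, mem_univ j⟩)

theorem sdiff_subset_sup_sdiff_sup (S T : ι → Finset α)
    (hT : ∀ i j, i ≠ j → Disjoint (T i) (S j)) (i : ι) :
    S i \ T i ⊆ univ.sup S \ univ.sup T := by
  intro x hx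
  obtain ⟨hxS, hxT⟩ := mem_sdiff.1 hx
  refine mem_sdiff.2 ⟨mem_sup.2 ⟨i, mem_univ i, hxS⟩, fun hx' => ?_⟩
  obtain ⟨j, -, hxTj⟩ := mem_sup.1 hx'
  by_cases hji : j = i
  · exact hxT (hji ▸ hxTj)
  · exact disjoint_left.1 (hT j i hji) hxTj hxS

theorem card_sup_eq_sum_card (S T : ι → Finset α) (hTS : ∀ i, T i ⊆ S i)
    (hT : ∀ i j, i ≠ j → Disjoint (T i) (S j)) :
    #(univ.sup T) = ∑ i, #(T i) := by
  rw [sup_eq_biUnion, card_biUnion]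
  exact fun i _ j _ hij => disjoint_of_subset_right (hTS j) (hT i j hij)

variable {K V : Type*} [DivisionRing K] [AddCommGroup V] [Module K V] (g : α → V)

theorem span_image_sup_sdiff_sup_eq (S T : ι → Finset α)
    (hT : ∀ i j, i ≠ j → Disjoint (T i) (S j))
    (hspan : ∀ i, span K (g '' ↑(S i \ T i)) = span K (g '' ↑(S i))) :
    span K (g '' ↑(univ.sup S \ univ.sup T)) = span K (g '' ↑(univ.sup S)) := by
  refine le_antisymm (span_mono (Set.image_mono (coe_subset.2 sdiff_subset))) ?_
  rw [span_le]
  rintro _ ⟨a, ha, rfl⟩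
  obtain ⟨i, -, hai⟩ := mem_sup.1 ha
  have hgi : g a ∈ span K (g '' ↑(S i)) := subset_span ⟨a, hai, rfl⟩
  rw [← hspan i] at hgi
  exact span_mono (Set.image_mono (coe_subset.2 (sdiff_subset_sup_sdiff_sup S T hT i))) hgi

theorem finrank_span_image_sup_add_sum_card_le (S T : ι → Finset α) (hTS : ∀ i, T i ⊆ S i)
    (hT : ∀ i j, i ≠ j → Disjoint (T i) (S j))
    (hspan : ∀ i, span K (g '' ↑(S i \ T i)) = span K (g '' ↑(S i))) :
    Module.finrank K (span K (g '' ↑(univ.sup S))) + ∑ i, #(T i) ≤ #(univ.sup S) := by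
  rw [← span_image_sup_sdiff_sup_eq g S T hT hspan, ← card_sup_eq_sum_card S T hTS hT]
  have := finrank_span_image_le_card (K := K) g (univ.sup S \ univ.sup T)
  have := card_sdiff_add_card_eq_card (sup_mono_fun fun i _ => hTS i : univ.sup T ⊆ univ.sup S)
  omega

end PrivateParts

theorem stmt_13_general {F : Type*} [Field F] (n k δ t : ℕ)
    (g : Fin n → (Fin k → F))
    (S : Fin t → Finset (Fin n))
    (hrep : ∀ i, ∀ L ⊆ S i, L.card = (S i).card - (δ - 1) →
      colRank F g L = colRank F g (S i))
    (hC1 : ∀ i, (((S i) ∩ (Finset.univ.erase i).sup S).card : ℤ) <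
      ((S i).card : ℤ) - δ + 1) :
    (colRank F g (Finset.univ.sup S) : ℤ) ≤
      ((Finset.univ.sup S).card : ℤ) - t * ((δ : ℤ) - 1) := by
  obtain ⟨T, hTS, hTcard, hT⟩ := exists_subsets_card_eq_disjoint_others S (m := δ - 1) fun i => by
    have := card_inter_add_card_sdiff (S i) ((univ.erase i).sup S)
    have := hC1 i
    omega
  have hspan i : span F (g '' ↑(S i \ T i)) = span F (g '' ↑(S i)) :=
    span_image_eq_of_finrank_eq g sdiff_subset
      (hrep i _ sdiff_subset (by rw [card_sdiff_of_subset (hTS i), hTcard i]))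
  have hbound := finrank_span_image_sup_add_sum_card_le g S T hTS hT hspan
  simp only [hTcard, sum_const, card_univ, Fintype.card_fin, smul_eq_mul] at hbound
  have htrunc : (t : ℤ) * ((δ : ℤ) - 1) ≤ t * ((δ - 1 : ℕ) : ℤ) := by gcongr; omega
  unfold colRank
  omega

/-- Under Condition C1, the rank of the union of t repair sets is at most its
    size minus t(δ-1). -/
theorem stmt_13 {F : Type*} [Field F] (n k r δ t : ℕ) (hδ : 2 ≤ δ) (hr : 1 ≤ r)
    (g : Fin n → (Fin k → F))
    (S : Fin t → Finset (Fin n)) (hinj : Function.Injective S)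
    (hsize : ∀ i, (S i).card ≤ r + δ - 1)
    (hrep : ∀ i, ∀ L ⊆ S i, L.card = (S i).card - (δ - 1) →
      colRank F g L = colRank F g (S i))
    (hC1 : ∀ i, (((S i) ∩ (Finset.univ.erase i).sup S).card : ℤ) <
      ((S i).card : ℤ) - δ + 1) :
    (colRank F g (Finset.univ.sup S) : ℤ) ≤
      ((Finset.univ.sup S).card : ℤ) - t * ((δ : ℤ) - 1) :=
  stmt_13_general n k δ t g S hrep hC1
end

section
/- Let C be an [n,k] linear code with generator columns g_i, and let S_i, S_j be two (r,δ)-repair sets with |S_i ∩ S_j| ≥ |S_i| - δ + 1. Then rank(S_i) = rank(S_i ∩ S_j), and consequently span(S_i) ⊆ span(S_j). -/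
section

variable {F : Type*} [Field F] {n k : ℕ} (g : Fin n → (Fin k → F))

theorem span_image_mono_of_subset {N M : Finset (Fin n)} (h : N ⊆ M) :
    Submodule.span F (g '' ↑N) ≤ Submodule.span F (g '' ↑M) :=
  Submodule.span_mono (Set.image_mono (Finset.coe_subset.2 h))

theorem span_image_eq_of_subset_of_colRank_eq {L S : Finset (Fin n)} (hLS : L ⊆ S)
    (hrank : colRank F g L = colRank F g S) :
    Submodule.span F (g '' ↑L) = Submodule.span F (g '' ↑S) :=
  Submodule.eq_of_le_of_finrank_le (span_image_mono_of_subset g hLS) hrank.ge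

theorem span_image_eq_of_repair {δ : ℕ} {S T : Finset (Fin n)}
    (hrep : ∀ L ⊆ S, L.card = S.card - (δ - 1) → colRank F g L = colRank F g S)
    (hTS : T ⊆ S) (hT : S.card - (δ - 1) ≤ T.card) :
    Submodule.span F (g '' ↑T) = Submodule.span F (g '' ↑S) := by
  obtain ⟨L, hLT, hLcard⟩ := Finset.exists_subset_card_eq hT
  have hLS : Submodule.span F (g '' ↑L) = Submodule.span F (g '' ↑S) :=
    span_image_eq_of_subset_of_colRank_eq g (hLT.trans hTS) (hrep L (hLT.trans hTS) hLcard)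
  refine le_antisymm (span_image_mono_of_subset g hTS) ?_
  exact hLS ▸ span_image_mono_of_subset g hLT

end

theorem stmt_14_general {F : Type*} [Field F] (n k δ : ℕ)
    (g : Fin n → (Fin k → F))
    (Si Sj : Finset (Fin n))
    (hrepi : ∀ L ⊆ Si, L.card = Si.card - (δ - 1) →
      colRank F g L = colRank F g Si)
    (hint : ((Si.card : ℤ) - δ + 1) ≤ ((Si ∩ Sj).card : ℤ)) :
    colRank F g Si = colRank F g (Si ∩ Sj) ∧
    Submodule.span F (g '' ↑Si) ≤ Submodule.span F (g '' ↑Sj) := by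
  have hspan : Submodule.span F (g '' ↑(Si ∩ Sj)) = Submodule.span F (g '' ↑Si) :=
    span_image_eq_of_repair g hrepi Finset.inter_subset_left (by omega)
  refine ⟨by rw [colRank, colRank, hspan], ?_⟩
  exact hspan ▸ span_image_mono_of_subset g Finset.inter_subset_right

/-- If S_i, S_j are (r,δ)-repair sets with |S_i ∩ S_j| ≥ |S_i| - δ + 1, then
    rank(S_i) = rank(S_i ∩ S_j) and span(S_i) ⊆ span(S_j). -/
theorem stmt_14 {F : Type*} [Field F] (n k r δ : ℕ) (hδ : 2 ≤ δ) (hr : 1 ≤ r)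
    (g : Fin n → (Fin k → F))
    (Si Sj : Finset (Fin n))
    (hsizei : Si.card ≤ r + δ - 1) (hsizej : Sj.card ≤ r + δ - 1)
    (hrepi : ∀ L ⊆ Si, L.card = Si.card - (δ - 1) →
      colRank F g L = colRank F g Si)
    (hrepj : ∀ L ⊆ Sj, L.card = Sj.card - (δ - 1) →
      colRank F g L = colRank F g Sj)
    (hint : ((Si.card : ℤ) - δ + 1) ≤ ((Si ∩ Sj).card : ℤ)) :
    colRank F g Si = colRank F g (Si ∩ Sj) ∧
    Submodule.span F (g '' ↑Si) ≤ Submodule.span F (g '' ↑Sj) :=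
  stmt_14_general n k δ g Si Sj hrepi hint
end

section
/- Let C be an [n,k] linear code with (r,δ)_a-locality where k = ur + v, 0 < v ≤ r, and u ≥ 1. Suppose there is a family V_1 of (r,δ)-repair sets satisfying Condition C1 with |V_1| ≤ u and |V_1|(r+δ-1) - |∪_{S∈V_1} S| ≥ Δ ≥ 0, and let S be the ECF of repair sets covering [n]. Then there exists a subset S ⊆ [n] with rank(S) = k-1 and |S| ≥ k - 1 + (⌈(k+Δ)/r⌉ - 1)(δ-1). -/
section Aux

variable {F : Type*} [Field F] {n k : ℕ} (g : Fin n → (Fin k → F))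

private lemma span_union' (A B : Finset (Fin n)) :
    Submodule.span F (g '' ↑(A ∪ B)) =
      Submodule.span F (g '' ↑A) ⊔ Submodule.span F (g '' ↑B) := by
  rw [Finset.coe_union, Set.image_union, Submodule.span_union]

private lemma colRank_le_k (N : Finset (Fin n)) : colRank F g N ≤ k := by
  have h := Submodule.finrank_le (Submodule.span F (g '' ↑N))
  simpa [colRank] using h

private lemma colRank_mono {A B : Finset (Fin n)} (h : A ⊆ B) :
    colRank F g A ≤ colRank F g B :=
  Submodule.finrank_mono (Submodule.span_mono (Set.image_mono h))

private lemma colRank_le_card (N : Finset (Fin n)) : colRank F g N ≤ N.card := by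
  classical
  have h1 : g '' ↑N = ↑(N.image g) := by simp [Finset.coe_image]
  have h2 := finrank_span_finset_le_card (R := F) (N.image g)
  rw [colRank, h1]
  exact le_trans h2 Finset.card_image_le

private lemma colRank_union_le_rank (A B : Finset (Fin n)) :
    colRank F g (A ∪ B) ≤ colRank F g A + colRank F g B := by
  have h := Submodule.finrank_sup_add_finrank_inf_eq
    (Submodule.span F (g '' ↑A)) (Submodule.span F (g '' ↑B))
  unfold colRank
  rw [span_union']
  omega

private lemma colRank_union_le (A B : Finset (Fin n)) :
    colRank F g (A ∪ B) ≤ colRank F g A + B.card :=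
  le_trans (colRank_union_le_rank g A B) (by have := colRank_le_card g B; omega)

private lemma colRank_union_sdiff_le (A B : Finset (Fin n)) :
    colRank F g (A ∪ B) ≤ colRank F g A + (B \ A).card := by
  rw [← Finset.union_sdiff_self_eq_union]
  exact colRank_union_le g A (B \ A)

private lemma colRank_insert_le (x : Fin n) (N : Finset (Fin n)) :
    colRank F g (insert x N) ≤ colRank F g N + 1 := by
  rw [Finset.insert_eq, Finset.union_comm]
  have := colRank_union_le g N {x}
  simpa using this

private lemma span_eq_of_le_rank {A B : Finset (Fin n)} (h : A ⊆ B)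
    (hr : colRank F g B ≤ colRank F g A) :
    Submodule.span F (g '' ↑A) = Submodule.span F (g '' ↑B) :=
  Submodule.eq_of_le_of_finrank_le (Submodule.span_mono (Set.image_mono h)) hr

private lemma span_sdiff_eq {δ : ℕ} (hδ : 2 ≤ δ) {s : Finset (Fin n)}
    (hs : ∀ L ⊆ s, L.card = s.card - (δ - 1) → colRank F g L = colRank F g s)
    {D : Finset (Fin n)} (hD : D ⊆ s) (hDcard : D.card = δ - 1) :
    Submodule.span F (g '' ↑(s \ D)) = Submodule.span F (g '' ↑s) := by
  apply span_eq_of_le_rank g Finset.sdiff_subset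
  have h := hs (s \ D) Finset.sdiff_subset (by rw [Finset.card_sdiff_of_subset hD, hDcard])
  exact h.ge

private lemma colRank_union_eq {δ : ℕ} (hδ : 2 ≤ δ) {s A : Finset (Fin n)}
    (hs : ∀ L ⊆ s, L.card = s.card - (δ - 1) → colRank F g L = colRank F g s)
    (hsmall : (s \ A).card ≤ δ - 1) :
    colRank F g (A ∪ s) = colRank F g A := by
  classical
  have hle : Submodule.span F (g '' ↑(A ∪ s)) ≤ Submodule.span F (g '' ↑A) := by
    rcases le_or_gt (δ - 1) s.card with hc | hc
    · obtain ⟨D, hsD, hDs, hDcard⟩ := Finset.exists_subsuperset_card_eq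
        (Finset.sdiff_subset : s \ A ⊆ s) hsmall hc
      have hspan := span_sdiff_eq g hδ hs hDs hDcard
      have hsub : s \ D ⊆ A := by
        intro x hx
        rcases Finset.mem_sdiff.mp hx with ⟨hxs, hxD⟩
        by_contra hxA
        exact hxD (hsD (Finset.mem_sdiff.mpr ⟨hxs, hxA⟩))
      rw [span_union']
      apply sup_le le_rfl
      rw [← hspan]
      exact Submodule.span_mono (Set.image_mono hsub)
    · have h0 : colRank F g s = 0 := by
        have h := hs ∅ (Finset.empty_subset s) (by simp; omega)
        have he : colRank F g (∅ : Finset (Fin n)) = 0 := by simp [colRank]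
        omega
      have hbot : Submodule.span F (g '' ↑s) = ⊥ :=
        (Submodule.finrank_eq_zero (R := F)).mp h0
      rw [span_union', hbot]
      simp
  have hge : Submodule.span F (g '' ↑A) ≤ Submodule.span F (g '' ↑(A ∪ s)) :=
    Submodule.span_mono (Set.image_mono Finset.subset_union_left)
  unfold colRank
  rw [le_antisymm hle hge]

private lemma colRank_union_le_gain {δ : ℕ} (hδ : 2 ≤ δ) {s A : Finset (Fin n)}
    (hs : ∀ L ⊆ s, L.card = s.card - (δ - 1) → colRank F g L = colRank F g s)
    (hbig : δ - 1 ≤ (s \ A).card) :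
    colRank F g (A ∪ s) + (δ - 1) ≤ colRank F g A + (s \ A).card := by
  classical
  obtain ⟨D, hDsub, hDcard⟩ := Finset.exists_subset_card_eq hbig
  have hDs : D ⊆ s := hDsub.trans Finset.sdiff_subset
  have hspan := span_sdiff_eq g hδ hs hDs hDcard
  have he : colRank F g (A ∪ s) = colRank F g (A ∪ (s \ D)) := by
    unfold colRank
    rw [span_union', span_union', hspan]
  have h2 := colRank_union_sdiff_le g A (s \ D)
  have h3 : (s \ D) \ A = (s \ A) \ D := by
    ext x; simp only [Finset.mem_sdiff]; tauto
  have h4 : ((s \ A) \ D).card = (s \ A).card - (δ - 1) := by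
    rw [Finset.card_sdiff_of_subset hDsub, hDcard]
  rw [h3, h4] at h2
  omega

private lemma colRank_repair_le {δ r : ℕ} (hδ : 2 ≤ δ) {s : Finset (Fin n)}
    (hs : ∀ L ⊆ s, L.card = s.card - (δ - 1) → colRank F g L = colRank F g s)
    (hcard : s.card ≤ r + δ - 1) : colRank F g s ≤ r := by
  obtain ⟨L, hLs, hLcard⟩ := Finset.exists_subset_card_eq (Nat.sub_le s.card (δ - 1))
  have h1 := hs L hLs hLcard
  have h2 := colRank_le_card g L
  omega

private lemma exists_gain {S : Finset (Finset (Fin n))}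
    (hcover : S.sup id = Finset.univ) (hfull : colRank F g Finset.univ = k)
    {A : Finset (Fin n)} (hA : colRank F g A < k) :
    ∃ s ∈ S, colRank F g A < colRank F g (A ∪ s) := by
  classical
  by_contra hcon
  push_neg at hcon
  have hsub : ∀ s ∈ S, Submodule.span F (g '' ↑s) ≤ Submodule.span F (g '' ↑A) := by
    intro s hsS
    have heq : Submodule.span F (g '' ↑A) = Submodule.span F (g '' ↑(A ∪ s)) :=
      span_eq_of_le_rank g Finset.subset_union_left (hcon s hsS)
    rw [heq, span_union']
    exact le_sup_right
  have hle : Submodule.span F (g '' ↑(Finset.univ : Finset (Fin n))) ≤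
      Submodule.span F (g '' ↑A) := by
    rw [Submodule.span_le]
    rintro y ⟨x, _, rfl⟩
    have hx : x ∈ S.sup id := by rw [hcover]; exact Finset.mem_univ x
    obtain ⟨s, hsS, hxs⟩ := Finset.mem_sup.mp hx
    exact hsub s hsS (Submodule.subset_span ⟨x, by simpa using hxs, rfl⟩)
  have hmono := Submodule.finrank_mono hle
  unfold colRank at hfull hA
  omega

private lemma exists_intermediate (B : Finset (Fin n)) :
    ∀ (A : Finset (Fin n)) (t : ℕ), colRank F g A ≤ t → t ≤ colRank F g (A ∪ B) →
      ∃ P ⊆ B, colRank F g (A ∪ P) = t := by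
  classical
  induction B using Finset.induction_on with
  | empty =>
    intro A t h1 h2
    refine ⟨∅, Finset.Subset.refl _, ?_⟩
    simp only [Finset.union_empty] at h2 ⊢
    omega
  | @insert x B hx ih =>
    intro A t h1 h2
    rcases le_or_gt t (colRank F g (A ∪ B)) with h | h
    · obtain ⟨P, hPB, hP⟩ := ih A t h1 h
      exact ⟨P, hPB.trans (Finset.subset_insert x B), hP⟩
    · have hins : colRank F g (A ∪ insert x B) ≤ colRank F g (A ∪ B) + 1 := by
        rw [Finset.union_insert]
        exact colRank_insert_le g x (A ∪ B)
      exact ⟨insert x B, Finset.Subset.refl _, by omega⟩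

end Aux

/-- Given a family V1 of repair sets satisfying Condition C1 with |V1| ≤ u and
    |V1|(r+δ-1) - |∪V1| ≥ Δ ≥ 0, there exists T ⊆ [n] with rank(T) = k-1 and
    |T| ≥ k - 1 + (⌈(k+Δ)/r⌉ - 1)(δ-1). -/
theorem stmt_18 {F : Type*} [Field F] (n k r δ u v Δ : ℕ) (hδ : 2 ≤ δ)
    (hk : k = u * r + v) (hv0 : 0 < v) (hv : v ≤ r) (hu : 1 ≤ u)
    (g : Fin n → (Fin k → F))
    (hfull : colRank F g Finset.univ = k)
    (S : Finset (Finset (Fin n)))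
    (hcover : S.sup id = Finset.univ)
    (hsize : ∀ s ∈ S, s.card ≤ r + δ - 1)
    (hrep : ∀ s ∈ S, ∀ L ⊆ s, L.card = s.card - (δ - 1) →
      colRank F g L = colRank F g s)
    (V1 : Finset (Finset (Fin n))) (hV1 : V1 ⊆ S) (hV1u : V1.card ≤ u)
    (hC1 : ∀ s ∈ V1, ((s ∩ (V1.erase s).sup id).card : ℤ) <
      (s.card : ℤ) - δ + 1)
    (hΔ : (Δ : ℤ) ≤ (V1.card : ℤ) * ((r : ℤ) + δ - 1) -
      ((V1.sup id).card : ℤ)) :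
    ∃ T : Finset (Fin n), colRank F g T = k - 1 ∧
      (k : ℤ) - 1 + ((((k + Δ + r - 1) / r : ℕ) : ℤ) - 1) * ((δ : ℤ) - 1) ≤
        (T.card : ℤ) := by
  classical
  set M : ℕ := (k + Δ + r - 1) / r with hM
  have hr1 : 1 ≤ r := le_trans hv0 hv
  have hur : 1 * 1 ≤ u * r := Nat.mul_le_mul hu hr1
  have hk1 : 1 ≤ k := by omega
  have hδ1 : (0 : ℤ) ≤ (δ : ℤ) - 1 := by
    have : (2 : ℤ) ≤ (δ : ℤ) := by exact_mod_cast hδ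
    linarith
  -- main greedy induction
  have main : ∀ d : ℕ, ∀ A : Finset (Fin n), ∀ j : ℕ,
      colRank F g A < k →
      (colRank F g A : ℤ) ≤ (j : ℤ) * r - Δ →
      (colRank F g A : ℤ) + (j : ℤ) * ((δ : ℤ) - 1) ≤ (A.card : ℤ) →
      k - colRank F g A ≤ d →
      ∃ T : Finset (Fin n), colRank F g T = k - 1 ∧
        (k : ℤ) - 1 + ((M : ℤ) - 1) * ((δ : ℤ) - 1) ≤ (T.card : ℤ) := by
    intro d
    induction d with
    | zero => intro A j h1 _ _ h4; omega
    | succ d ih =>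
      intro A j h1 h2 h3 h4
      obtain ⟨s, hsS, hgain⟩ := exists_gain g hcover hfull h1
      have hbig : δ - 1 ≤ (s \ A).card := by
        by_contra hsm
        push_neg at hsm
        have := colRank_union_eq g hδ (hrep s hsS) (A := A) (by omega)
        omega
      have hgainle := colRank_union_le_gain g hδ (hrep s hsS) hbig
      have hgz : (colRank F g (A ∪ s) : ℤ) + ((δ : ℤ) - 1) ≤
          (colRank F g A : ℤ) + ((s \ A).card : ℤ) := by
        have h1δ : 1 ≤ δ := by omega
        zify [h1δ] at hgainle
        exact hgainle
      have hcardU : ((A ∪ s).card : ℤ) = (A.card : ℤ) + ((s \ A).card : ℤ) := by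
        have : (A ∪ s).card = A.card + (s \ A).card := by
          rw [← Finset.union_sdiff_self_eq_union]
          exact Finset.card_union_of_disjoint Finset.disjoint_sdiff
        exact_mod_cast this
      have hrle : (colRank F g (A ∪ s) : ℤ) ≤ (colRank F g A : ℤ) + r := by
        have hsr : colRank F g s ≤ r := colRank_repair_le g hδ (hrep s hsS) (hsize s hsS)
        have := colRank_union_le_rank g A s
        have h' : colRank F g (A ∪ s) ≤ colRank F g A + r := by omega
        exact_mod_cast h'
      rcases lt_or_ge (colRank F g (A ∪ s)) k with hlt | hge
      · refine ih (A ∪ s) (j + 1) hlt ?_ ?_ ?_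
        · push_cast
          linarith
        · push_cast
          linarith
        · omega
      · have hk' : colRank F g (A ∪ s) = k := le_antisymm (colRank_le_k g _) hge
        have hMj : (M : ℤ) - 1 ≤ (j : ℤ) := by
          have h5 : (k : ℤ) + Δ ≤ ((j : ℤ) + 1) * r := by
            have := hrle
            rw [hk'] at this
            push_cast at this ⊢
            linarith
          have h6 : k + Δ ≤ (j + 1) * r := by exact_mod_cast h5
          have h7 : M < j + 2 := by
            rw [hM, Nat.div_lt_iff_lt_mul (by omega : 0 < r)]
            calc k + Δ + r - 1 < (j + 1) * r + r := by omega
              _ = (j + 2) * r := by ring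
          have : M ≤ j + 1 := by omega
          have hz : (M : ℤ) ≤ (j : ℤ) + 1 := by exact_mod_cast this
          linarith
        obtain ⟨P, hPs, hP⟩ := exists_intermediate g s A (k - 1)
          (by omega) (by omega)
        refine ⟨A ∪ P, hP, ?_⟩
        have hc1 : k ≤ colRank F g A + (P \ A).card + 1 := by
          have := colRank_union_sdiff_le g A P
          omega
        have hc1' : (k : ℤ) - 1 ≤ (colRank F g A : ℤ) + ((P \ A).card : ℤ) := by
          have : (k : ℤ) ≤ (colRank F g A : ℤ) + ((P \ A).card : ℤ) + 1 := by
            exact_mod_cast hc1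
          linarith
        have hc2 : ((A ∪ P).card : ℤ) = (A.card : ℤ) + ((P \ A).card : ℤ) := by
          have : (A ∪ P).card = A.card + (P \ A).card := by
            rw [← Finset.union_sdiff_self_eq_union]
            exact Finset.card_union_of_disjoint Finset.disjoint_sdiff
          exact_mod_cast this
        have hprod : ((M : ℤ) - 1) * ((δ : ℤ) - 1) ≤ (j : ℤ) * ((δ : ℤ) - 1) :=
          mul_le_mul_of_nonneg_right hMj hδ1
        linarith
  -- phase 1: the V1 family
  have phase1 : ∀ V : Finset (Finset (Fin n)), V ⊆ V1 →
      (colRank F g (V.sup id) : ℤ) + (V.card : ℤ) * ((δ : ℤ) - 1) ≤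
        ((V.sup id).card : ℤ) := by
    intro V
    induction V using Finset.induction_on with
    | empty => intro _; simp [colRank]
    | @insert s V hsV ih =>
      intro hsub
      have hsV1 : s ∈ V1 := hsub (Finset.mem_insert_self s V)
      have hVsub : V ⊆ V1 := (Finset.subset_insert s V).trans hsub
      have hA := ih hVsub
      have hsupins : (insert s V).sup id = (V.sup id) ∪ s := by
        rw [Finset.sup_insert]
        simp [Finset.sup_eq_union, Finset.union_comm]
      have hsub2 : V.sup id ⊆ (V1.erase s).sup id := by
        have h := Finset.sup_mono (f := id) (Finset.subset_erase.mpr ⟨hVsub, hsV⟩)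
        exact h
      have hinter : (s ∩ V.sup id).card ≤ (s ∩ (V1.erase s).sup id).card :=
        Finset.card_le_card (Finset.inter_subset_inter (Finset.Subset.refl s) hsub2)
      have hC := hC1 s hsV1
      have hsd : (s \ V.sup id).card + (s ∩ V.sup id).card = s.card :=
        Finset.card_sdiff_add_card_inter s (V.sup id)
      have hbig : δ - 1 ≤ (s \ V.sup id).card := by
        have hz : ((s ∩ V.sup id).card : ℤ) + (δ : ℤ) ≤ (s.card : ℤ) := by
          have : ((s ∩ V.sup id).card : ℤ) ≤ ((s ∩ (V1.erase s).sup id).card : ℤ) := by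
            exact_mod_cast hinter
          linarith
        have hn : (s ∩ V.sup id).card + δ ≤ s.card := by exact_mod_cast hz
        omega
      have hgain := colRank_union_le_gain g hδ (hrep s (hV1 hsV1)) hbig
      have hgz : (colRank F g ((V.sup id) ∪ s) : ℤ) + ((δ : ℤ) - 1) ≤
          (colRank F g (V.sup id) : ℤ) + ((s \ V.sup id).card : ℤ) := by
        have h1δ : 1 ≤ δ := by omega
        zify [h1δ] at hgain
        exact hgain
      have hcardU : (((V.sup id) ∪ s).card : ℤ) =
          ((V.sup id).card : ℤ) + ((s \ V.sup id).card : ℤ) := by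
        have : ((V.sup id) ∪ s).card = (V.sup id).card + (s \ V.sup id).card := by
          rw [← Finset.union_sdiff_self_eq_union]
          exact Finset.card_union_of_disjoint Finset.disjoint_sdiff
        exact_mod_cast this
      rw [hsupins, Finset.card_insert_of_notMem hsV]
      push_cast
      have hexp : ((V.card : ℤ) + 1) * ((δ : ℤ) - 1) =
          (V.card : ℤ) * ((δ : ℤ) - 1) + ((δ : ℤ) - 1) := by ring
      linarith
  -- kickoff
  have hph := phase1 V1 (Finset.Subset.refl V1)
  have hΔ0 : (0 : ℤ) ≤ (Δ : ℤ) := by positivity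
  have hring : (V1.card : ℤ) * ((r : ℤ) + δ - 1) - (V1.card : ℤ) * ((δ : ℤ) - 1) =
      (V1.card : ℤ) * r := by ring
  have hrank0 : (colRank F g (V1.sup id) : ℤ) ≤ (V1.card : ℤ) * r - Δ := by
    linarith
  have hlt : colRank F g (V1.sup id) < k := by
    have h1 : (V1.card : ℤ) * r ≤ (u : ℤ) * r := by
      apply mul_le_mul_of_nonneg_right _ (by positivity)
      exact_mod_cast hV1u
    have hkz : (k : ℤ) = (u : ℤ) * r + v := by exact_mod_cast hk
    have hvz : (0 : ℤ) < v := by exact_mod_cast hv0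
    have h2 : (colRank F g (V1.sup id) : ℤ) < k := by linarith
    exact_mod_cast h2
  obtain ⟨T, hT1, hT2⟩ := main k (V1.sup id) V1.card hlt hrank0 hph (by omega)
  exact ⟨T, hT1, hT2⟩
end

section
/- For an [n,k] linear code C with (r,δ)_a-locality where k = ur + v, 0 < v ≤ r, and u ≥ 1, the parameters satisfy w ≥ u, where n = w(r+δ-1)+m with 0 ≤ m < r+δ-1; equivalently n ≥ u(r+δ-1) + v + (δ-1). -/
set_option maxHeartbeats 1000000
set_option synthInstance.maxHeartbeats 200000

open Module LinearMap

section aux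

variable {F : Type*} [Field F] {n : ℕ}

/-- Projection onto coordinates in `T` (zero elsewhere). -/
noncomputable def prL (T : Finset (Fin n)) : (Fin n → F) →ₗ[F] (Fin n → F) where
  toFun x := fun i => if i ∈ T then x i else 0
  map_add' x y := by ext i; by_cases h : i ∈ T <;> simp [h]
  map_smul' c x := by ext i; by_cases h : i ∈ T <;> simp [h]

lemma prL_apply (T : Finset (Fin n)) (x : Fin n → F) (i : Fin n) :
    prL T x i = if i ∈ T then x i else 0 := rfl

lemma prL_prL {T T' : Finset (Fin n)} (h : T ⊆ T') (x : Fin n → F) :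
    prL T (prL T' x) = prL T x := by
  funext i; by_cases hi : i ∈ T
  · simp [prL_apply, hi, h hi]
  · simp [prL_apply, hi]

lemma finrank_map_le' (C : Submodule F (Fin n → F)) (f : (Fin n → F) →ₗ[F] (Fin n → F)) :
    finrank F (C.map f) ≤ finrank F C := Submodule.finrank_map_le f C

lemma prL_comp {T T' : Finset (Fin n)} (h : T ⊆ T') :
    (prL T (F := F)).comp (prL T') = prL T :=
  LinearMap.ext (prL_prL h)

/-- rank of the code punctured to `T`. -/
noncomputable def rk (C : Submodule F (Fin n → F)) (T : Finset (Fin n)) : ℕ :=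
  finrank F (C.map (prL T))

lemma rk_decomp (C : Submodule F (Fin n → F)) {A B : Finset (Fin n)} (h : A ⊆ B) :
    rk C B = rk C A + finrank F (ker ((prL A).domRestrict (C.map (prL B)))) := by
  have h1 := LinearMap.finrank_range_add_finrank_ker ((prL A).domRestrict (C.map (prL B)))
  rw [LinearMap.range_domRestrict, (Submodule.map_comp (prL B) (prL A) C).symm,
    prL_comp h] at h1
  exact h1.symm

lemma rk_empty (C : Submodule F (Fin n → F)) : rk C ∅ = 0 := by
  have : C.map (prL (∅ : Finset (Fin n))) = ⊥ := by
    rw [Submodule.eq_bot_iff]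
    rintro x ⟨c, _, rfl⟩
    funext i
    simp [prL_apply]
  rw [rk, this, finrank_bot]

lemma rk_mono (C : Submodule F (Fin n → F)) {A B : Finset (Fin n)} (h : A ⊆ B) :
    rk C A ≤ rk C B := by
  rw [rk_decomp C h]; omega

/-- adding one coordinate increases rank by at most 1 -/
lemma rk_insert_le (C : Submodule F (Fin n → F)) (A : Finset (Fin n)) (i : Fin n) :
    rk C (insert i A) ≤ rk C A + 1 := by
  rw [rk_decomp C (Finset.subset_insert i A)]
  set K := ker ((prL A).domRestrict (C.map (prL (insert i A)))) with hK
  set φ := (LinearMap.proj i (R := F) (φ := fun _ : Fin n => F)).comp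
        ((Submodule.subtype _).comp (Submodule.subtype K)) with hφ
  have hker0 : ker φ = ⊥ := by
    rw [Submodule.eq_bot_iff]
    rintro ⟨⟨z, hz⟩, hz0⟩ hki
    simp only [hφ, LinearMap.mem_ker, LinearMap.comp_apply, Submodule.coe_subtype,
      LinearMap.proj_apply] at hki
    simp only [hK, LinearMap.mem_ker, LinearMap.domRestrict_apply] at hz0
    have hz' : z = 0 := by
      funext j
      by_cases hj : j ∈ A
      · have e1 : prL A z j = 0 := by rw [hz0]; rfl
        simpa [prL_apply, hj] using e1
      · by_cases hji : j = i
        · subst hji; exact hki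
        · obtain ⟨c, _, rfl⟩ := hz
          simp [prL_apply, Finset.mem_insert, hj, hji]
    exact Subtype.ext (Subtype.ext hz')
  have hinj : Function.Injective φ := by
    intro a b hab
    have hm : a - b ∈ LinearMap.ker φ := by rw [LinearMap.mem_ker, φ.map_sub a b, hab, sub_self]
    rw [hker0, Submodule.mem_bot] at hm
    exact sub_eq_zero.mp hm
  have hle := LinearMap.finrank_le_finrank_of_injective hinj
  simp only [finrank_self] at hle
  omega

lemma rk_union_le (C : Submodule F (Fin n → F)) (A X : Finset (Fin n)) :
    rk C (A ∪ X) ≤ rk C A + X.card := by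
  classical
  induction X using Finset.induction_on with
  | empty => simpa using rk_mono C (by simp)
  | @insert i X hi ih =>
    have h1 : A ∪ insert i X = insert i (A ∪ X) := by
      ext j; simp only [Finset.mem_insert, Finset.mem_union]; tauto
    rw [h1, Finset.card_insert_of_notMem hi]
    have := rk_insert_le C (A ∪ X) i
    omega

/-- strict increase: if some codeword vanishes on T but not on S -/
lemma rk_lt (C : Submodule F (Fin n → F)) (T S : Finset (Fin n))
    (c : Fin n → F) (hc : c ∈ C) (hcT : prL T c = 0) (i : Fin n) (hiS : i ∈ S)
    (hci : c i ≠ 0) : rk C T + 1 ≤ rk C (T ∪ S) := by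
  rw [rk_decomp C (Finset.subset_union_left (s₂ := S))]
  set K := ker ((prL T).domRestrict (C.map (prL (T ∪ S)))) with hK
  have hz : prL (T ∪ S) c ∈ C.map (prL (T ∪ S)) := ⟨c, hc, rfl⟩
  have hzK : (⟨prL (T ∪ S) c, hz⟩ : C.map (prL (T ∪ S))) ∈ K := by
    simp only [hK, LinearMap.mem_ker, LinearMap.domRestrict_apply]
    rw [prL_prL (Finset.subset_union_left (s₂ := S))]
    exact hcT
  have hzne : (⟨prL (T ∪ S) c, hz⟩ : C.map (prL (T ∪ S))) ≠ 0 := by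
    intro h
    apply hci
    have h0 : prL (T ∪ S) c i = 0 := by
      rw [Subtype.ext_iff] at h
      simp only [ZeroMemClass.coe_zero] at h
      rw [h]; rfl
    simpa [prL_apply, Finset.mem_union, hiS] using h0
  have hne : K ≠ ⊥ := fun h => hzne (by simpa [h] using hzK)
  have hpos : 0 < finrank F K := by
    rw [Nat.pos_iff_ne_zero]
    intro h0
    exact hne (Submodule.finrank_eq_zero.mp h0)
  omega

/-- deletion of fewer than δ coordinates of a repair set does not decrease rank -/
lemma rk_del [DecidableEq F] (C : Submodule F (Fin n → F)) (T S D : Finset (Fin n)) {δ : ℕ}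
    (hD : D ⊆ S) (hDcard : D.card < δ)
    (hS : ∀ c ∈ C, (∃ j ∈ S, c j ≠ 0) → δ ≤ (S.filter (fun j => c j ≠ 0)).card) :
    rk C (T ∪ S) ≤ rk C (T ∪ (S \ D)) := by
  classical
  have hsub : T ∪ (S \ D) ⊆ T ∪ S := by
    intro j hj
    rcases Finset.mem_union.mp hj with h | h
    · exact Finset.mem_union_left _ h
    · exact Finset.mem_union_right _ (Finset.mem_sdiff.mp h).1
  have hinj : Function.Injective
      ((prL (T ∪ (S \ D))).domRestrict (C.map (prL (T ∪ S)))) := by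
    rw [← LinearMap.ker_eq_bot, Submodule.eq_bot_iff]
    rintro ⟨z, hz⟩ hk
    simp only [LinearMap.mem_ker, LinearMap.domRestrict_apply] at hk
    obtain ⟨c, hcC, rfl⟩ := hz
    rw [prL_prL hsub] at hk
    have hc0 : ∀ j ∈ T ∪ (S \ D), c j = 0 := by
      intro j hj
      have := congrFun hk j
      simpa [prL_apply, hj] using this
    have hcS : ∀ j ∈ S, c j = 0 := by
      by_contra h
      push_neg at h
      obtain ⟨j, hjS, hjne⟩ := h
      have hfil := hS c hcC ⟨j, hjS, hjne⟩
      have hfsub : S.filter (fun j => c j ≠ 0) ⊆ D := by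
        intro x hx
        rw [Finset.mem_filter] at hx
        by_contra hxD
        exact hx.2 (hc0 x (Finset.mem_union_right _ (Finset.mem_sdiff.mpr ⟨hx.1, hxD⟩)))
      have := Finset.card_le_card hfsub
      omega
    have hz0 : prL (T ∪ S) c = 0 := by
      funext j
      by_cases hj : j ∈ T ∪ S
      · rcases Finset.mem_union.mp hj with h | h
        · simpa [prL_apply, hj] using hc0 j (Finset.mem_union_left _ h)
        · simpa [prL_apply, hj] using hcS j h
      · simp [prL_apply, hj]
    exact Subtype.ext hz0
  have h1 := LinearMap.finrank_range_add_finrank_ker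
    ((prL (T ∪ (S \ D))).domRestrict (C.map (prL (T ∪ S))))
  rw [LinearMap.ker_eq_bot.mpr hinj, finrank_bot, LinearMap.range_domRestrict,
    (Submodule.map_comp (prL (T ∪ S)) (prL (T ∪ (S \ D))) C).symm, prL_comp hsub] at h1
  show finrank F (C.map (prL (T ∪ S))) ≤ finrank F (C.map (prL (T ∪ (S \ D))))
  omega

end aux

/-- For an [n,k] linear code with (r,δ)_a-locality and k = ur+v, 0 < v ≤ r,
    u ≥ 1, we have w ≥ u, equivalently n ≥ u(r+δ-1) + v + (δ-1). -/
theorem stmt_19 {F : Type*} [Field F] [DecidableEq F]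
    (n k r δ u v w m : ℕ) (hδ : 2 ≤ δ) (hr : 1 ≤ r)
    (hk : k = u * r + v) (hv0 : 0 < v) (hv : v ≤ r) (hu : 1 ≤ u)
    (hn : n = w * (r + δ - 1) + m) (hm : m < r + δ - 1)
    (C : Submodule F (Fin n → F)) (hdim : Module.finrank F C = k)
    (hloc : ∀ i : Fin n, ∃ S : Finset (Fin n), i ∈ S ∧ S.card ≤ r + δ - 1 ∧
      ∀ c ∈ C, (∃ j ∈ S, c j ≠ 0) → δ ≤ (S.filter (fun j => c j ≠ 0)).card) :
    u ≤ w ∧ u * (r + δ - 1) + v + (δ - 1) ≤ n := by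
  classical
  have hrkle : ∀ T : Finset (Fin n), rk C T ≤ k := by
    intro T
    rw [← hdim]
    exact finrank_map_le' C (prL T)
  -- step lemma
  have step : ∀ T : Finset (Fin n), rk C T < k →
      ∃ T', T ⊆ T' ∧ rk C T + 1 ≤ rk C T' ∧ rk C T' ≤ rk C T + r ∧
        T.card + (rk C T' - rk C T) + (δ - 1) ≤ T'.card := by
    intro T hT
    -- find nonzero codeword vanishing on T
    have hker : ∃ c ∈ C, prL T c = 0 ∧ c ≠ 0 := by
      have h1 := LinearMap.finrank_range_add_finrank_ker ((prL T).domRestrict C)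
      rw [LinearMap.range_domRestrict] at h1
      have hkpos : 0 < finrank F (ker ((prL T).domRestrict C)) := by
        have h2 : rk C T + finrank F (ker ((prL T).domRestrict C)) = k := by
          rw [← hdim]; exact h1
        omega
      have hne : (ker ((prL T).domRestrict C)) ≠ ⊥ := by
        intro h
        rw [h, finrank_bot] at hkpos
        omega
      obtain ⟨⟨c, hcC⟩, hck, hcne⟩ := (Submodule.ne_bot_iff _).mp hne
      refine ⟨c, hcC, hck, fun h => hcne (Subtype.ext h)⟩
    obtain ⟨c, hcC, hcT, hcne⟩ := hker
    obtain ⟨i, hci⟩ := Function.ne_iff.mp hcne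
    obtain ⟨S, hiS, hScard, hSloc⟩ := hloc i
    have hinc := rk_lt C T S c hcC hcT i hiS hci
    have hSTδ : δ ≤ (S \ T).card := by
      by_contra hlt
      push_neg at hlt
      have hdel := rk_del C T S (S \ T) Finset.sdiff_subset hlt hSloc
      have heq : T ∪ (S \ (S \ T)) = T := by
        ext j
        simp only [Finset.mem_union, Finset.mem_sdiff]
        tauto
      rw [heq] at hdel
      omega
    obtain ⟨D, hDsub, hDcard⟩ := Finset.exists_subset_card_eq (s := S \ T) (n := δ - 1) (by omega)
    have hDS : D ⊆ S := hDsub.trans Finset.sdiff_subset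
    have hdel := rk_del C T S D hDS (by omega) hSloc
    -- rk (T ∪ (S \ D)) ≤ rk T + |S\T| - |D|
    have hsd : T ∪ (S \ D) = T ∪ ((S \ T) \ D) := by
      ext j
      simp only [Finset.mem_union, Finset.mem_sdiff]
      tauto
    have hub : rk C (T ∪ (S \ D)) ≤ rk C T + ((S \ T).card - (δ - 1)) := by
      rw [hsd]
      have := rk_union_le C T ((S \ T) \ D)
      have hcard : ((S \ T) \ D).card = (S \ T).card - (δ - 1) := by
        rw [Finset.card_sdiff_of_subset hDsub, hDcard]
      omega
    have hSTcard : (S \ T).card ≤ r + δ - 1 := le_trans (Finset.card_le_card Finset.sdiff_subset) hScard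
    refine ⟨T ∪ S, Finset.subset_union_left, hinc, ?_, ?_⟩
    · omega
    · have hcardu : (S \ T).card + T.card = (T ∪ S).card := by
        rw [Finset.union_comm]
        exact Finset.card_sdiff_add_card S T
      omega
  -- main loop
  have loop : ∀ d : ℕ, ∀ T : Finset (Fin n), ∀ t : ℕ,
      rk C T + t * (δ - 1) ≤ T.card → rk C T ≤ t * r → k ≤ rk C T + d →
      ∃ T' : Finset (Fin n), ∃ t' : ℕ, rk C T' = k ∧ k + t' * (δ - 1) ≤ T'.card ∧ k ≤ t' * r := by
    intro d
    induction d with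
    | zero =>
      intro T t h1 h2 h3
      have h4 : rk C T = k := le_antisymm (hrkle T) (by omega)
      exact ⟨T, t, h4, by omega, by omega⟩
    | succ d ih =>
      intro T t h1 h2 h3
      by_cases hTk : rk C T = k
      · exact ⟨T, t, hTk, by omega, by omega⟩
      · have hTlt : rk C T < k := lt_of_le_of_ne (hrkle T) hTk
        obtain ⟨T', hsub, hi1, hi2, hi3⟩ := step T hTlt
        refine ih T' (t + 1) ?_ ?_ ?_
        · have : (t + 1) * (δ - 1) = t * (δ - 1) + (δ - 1) := by ring
          omega
        · have : (t + 1) * r = t * r + r := by ring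
          omega
        · omega
  obtain ⟨T', t', hfk, hfcard, hfr⟩ := loop k ∅ 0 (by simp [rk_empty]) (by simp [rk_empty]) (by simp [rk_empty])
  -- t' ≥ u + 1
  have htu : u + 1 ≤ t' := by
    by_contra h
    push_neg at h
    have : t' * r ≤ u * r := Nat.mul_le_mul_right r (by omega)
    omega
  have hcn : T'.card ≤ n := by
    have := Finset.card_le_card (Finset.subset_univ T')
    simpa using this
  -- main inequality
  have hmain : u * (r + δ - 1) + v + (δ - 1) ≤ n := by
    have h1 : (u + 1) * (δ - 1) ≤ t' * (δ - 1) := Nat.mul_le_mul_right _ htu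
    have h2 : u * (r + δ - 1) = u * r + u * (δ - 1) := by
      have : r + δ - 1 = r + (δ - 1) := by omega
      rw [this, Nat.mul_add]
    have h3 : (u + 1) * (δ - 1) = u * (δ - 1) + (δ - 1) := by ring
    omega
  refine ⟨?_, hmain⟩
  by_contra hwu
  push_neg at hwu
  have : (w + 1) * (r + δ - 1) ≤ u * (r + δ - 1) := Nat.mul_le_mul_right _ (by omega)
  have h4 : (w + 1) * (r + δ - 1) = w * (r + δ - 1) + (r + δ - 1) := by ring
  omega
end
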